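/- Run Randomized PivotTracking on a fixed finite request sequence σ from initial center c₀. The evolution of the candidate set C, and hence whether each step is a union step or an intersection step, is deterministic (independent of the algorithm's random choices). Suppose that steps j, j+1, …, j+ε−1 are all union steps and that x ∈ σ_j. Then, for every possible center before step j, the conditional probability that x is the center immediately after step j+ε−1 is at least (1/3)^ε. -/

import Mathlib

/-- Cost of serving request `r` when node `c` is at the center of the star. -/
def serveCost {V : Type*} [DecidableEq V] (c : V) (r : V × V) : ℕ :=
  if c = r.1 ∨ c = r.2 then 1 else 2

/-- One step of Randomized PivotTracking, driven by one uniformly random value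
`ω : Fin 6` of the random tape.  The state is (current center, candidate set).
On request `r = {x₁, x₂}`:
* intersection behavior (`C ∩ {x₁, x₂} ≠ ∅`): `C ← C ∩ {x₁, x₂}`, and if the
  current center is not in the new `C`, migrate an element of `C` to the
  center, breaking ties uniformly at random (via `ω % 2`);
* union behavior: `C ← C ∪ {x₁, x₂}`, and with probability `1/3` each
  (via `ω % 3`) do nothing, migrate `x₁`, or migrate `x₂`. -/
def rptStep {V : Type*} [DecidableEq V] (st : V × Finset V) (r : V × V)
    (ω : Fin 6) : V × Finset V :=
  if (st.2 ∩ {r.1, r.2}).Nonempty then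
    let C' := st.2 ∩ {r.1, r.2}
    (if st.1 ∈ C' then st.1
     else if C' = {r.1, r.2} then (if ω.val % 2 = 0 then r.1 else r.2)
     else if r.1 ∈ C' then r.1 else r.2, C')
  else
    (if ω.val % 3 = 0 then st.1 else if ω.val % 3 = 1 then r.1 else r.2,
      st.2 ∪ {r.1, r.2})

/-- State (center, candidate set) of Randomized PivotTracking just before the
`t`-th request of `σ`, when the random choices are driven by the tape `ω`. -/
def rstate {V : Type*} [DecidableEq V] (c₀ : V) (σ : List (V × V))
    (ω : ℕ → Fin 6) : ℕ → V × Finset V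
  | 0 => (c₀, {c₀})
  | t + 1 => rptStep (rstate c₀ σ ω t) (σ.getD t (c₀, c₀)) (ω t)

/-- Run Randomized PivotTracking from state `st`, on the requests of `σ`
starting at index `t`, driven by the (finite) tape segment `τ`. -/
def runSeg {V : Type*} [DecidableEq V] (c₀ : V) (σ : List (V × V)) :
    V × Finset V → ℕ → List (Fin 6) → V × Finset V
  | st, _, [] => st
  | st, t, w :: τ => runSeg c₀ σ (rptStep st (σ.getD t (c₀, c₀)) w) (t + 1) τ

/-!
A union step with tape symbol `w` moves the center to `x₁` or `x₂` when `w % 3` is `1` or `2`, and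
leaves it in place when `w % 3 = 0`; the candidate set never depends on the tape. So every tape
whose first symbol selects `x` and whose other symbols keep the center ends the run at `x`. Each
of these constraints is met by exactly two of the six symbols, giving `2 ^ ε` favorable tapes
out of `6 ^ ε`.
-/

open Finset

section PivotTracking

variable {V : Type*}

def unionCenter (c : V) (r : V × V) (w : Fin 6) : V :=
  if w.val % 3 = 0 then c else if w.val % 3 = 1 then r.1 else r.2

theorem unionCenter_of_mod_three_eq_zero (c : V) (r : V × V) {w : Fin 6}
    (hw : w.val % 3 = 0) : unionCenter c r w = c :=
  if_pos hw

theorem exists_unionCenter_eq {x : V} {r : V × V} (hx : x = r.1 ∨ x = r.2) :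
    ∃ m < 3, ∀ (c : V) (w : Fin 6), w.val % 3 = m → unionCenter c r w = x := by
  rcases hx with rfl | rfl
  · exact ⟨1, by norm_num, fun c w hw => by simp [unionCenter, hw]⟩
  · exact ⟨2, by norm_num, fun c w hw => by simp [unionCenter, hw]⟩

variable [DecidableEq V]

theorem rptStep_snd (st : V × Finset V) (r : V × V) (ω : Fin 6) :
    (rptStep st r ω).2 =
      if (st.2 ∩ {r.1, r.2}).Nonempty then st.2 ∩ {r.1, r.2} else st.2 ∪ {r.1, r.2} := by
  unfold rptStep
  split <;> rfl

theorem rptStep_snd_congr {st st' : V × Finset V} (h : st.2 = st'.2) (r : V × V)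
    (ω ω' : Fin 6) : (rptStep st r ω).2 = (rptStep st' r ω').2 := by
  rw [rptStep_snd, rptStep_snd, h]

theorem rstate_snd_eq (c₀ : V) (σ : List (V × V)) (ω ω' : ℕ → Fin 6) (t : ℕ) :
    (rstate c₀ σ ω t).2 = (rstate c₀ σ ω' t).2 := by
  induction t with
  | zero => rfl
  | succ t ih => exact rptStep_snd_congr ih _ _ _

theorem rptStep_of_union {st : V × Finset V} {r : V × V} (h : st.2 ∩ {r.1, r.2} = ∅)
    (ω : Fin 6) : rptStep st r ω = (unionCenter st.1 r ω, st.2 ∪ {r.1, r.2}) := by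
  simp [rptStep, h, unionCenter]

def IsUnionStep (c₀ : V) (σ : List (V × V)) (ω : ℕ → Fin 6) (t : ℕ) : Prop :=
  (rstate c₀ σ ω t).2 ∩ {(σ.getD t (c₀, c₀)).1, (σ.getD t (c₀, c₀)).2} = ∅

variable {c₀ : V} {σ : List (V × V)} {ω : ℕ → Fin 6}

theorem rptStep_rstate_of_isUnionStep {t : ℕ} (hU : IsUnionStep c₀ σ ω t) (c : V)
    (w : Fin 6) :
    rptStep (c, (rstate c₀ σ ω t).2) (σ.getD t (c₀, c₀)) w =
      (unionCenter c (σ.getD t (c₀, c₀)) w, (rstate c₀ σ ω (t + 1)).2) :=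
  Prod.ext (by rw [rptStep_of_union (st := (c, _)) hU])
    (rptStep_snd_congr (st := (c, _)) (st' := rstate c₀ σ ω t) rfl _ _ (ω t))

theorem runSeg_rstate_of_mod_three_eq_zero (c : V) (τ : List (Fin 6)) (t : ℕ)
    (hU : ∀ s, t ≤ s → s < t + τ.length → IsUnionStep c₀ σ ω s) (hτ : ∀ w ∈ τ, w.val % 3 = 0) :
    runSeg c₀ σ (c, (rstate c₀ σ ω t).2) t τ = (c, (rstate c₀ σ ω (t + τ.length)).2) := by
  induction τ generalizing t with
  | nil => rfl
  | cons w τ ih =>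
    have hstep := rptStep_rstate_of_isUnionStep (hU t le_rfl (by simp)) c w
    rw [unionCenter_of_mod_three_eq_zero _ _ (hτ w List.mem_cons_self)] at hstep
    rw [runSeg, hstep, ih (t + 1) (fun s hs hs' => hU s (by omega) (by rw [List.length_cons]; omega))
      (fun v hv => hτ v (List.mem_cons_of_mem _ hv))]
    simp [add_assoc, add_comm 1]

def favorableTapes (ε m : ℕ) : Finset (Fin (ε + 1) → Fin 6) :=
  Fintype.piFinset fun k => univ.filter fun w : Fin 6 => w.val % 3 = if k = 0 then m else 0

theorem card_filter_mod_three_eq {m : ℕ} (hm : m < 3) :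
    (univ.filter fun w : Fin 6 => w.val % 3 = m).card = 2 := by
  interval_cases m <;> rfl

theorem card_favorableTapes (ε : ℕ) {m : ℕ} (hm : m < 3) :
    (favorableTapes ε m).card = 2 ^ (ε + 1) := by
  simp only [favorableTapes, Fintype.card_piFinset]
  rw [prod_eq_pow_card (b := 2)]
  · simp
  · intro k _
    exact card_filter_mod_three_eq (by split_ifs <;> omega)

theorem runSeg_rstate_fst_of_mem_favorableTapes {x : V} {j ε m : ℕ}
    (hU : ∀ t, j ≤ t → t < j + (ε + 1) → IsUnionStep c₀ σ ω t)
    (hm : ∀ (c : V) (w : Fin 6), w.val % 3 = m → unionCenter c (σ.getD j (c₀, c₀)) w = x)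
    (c : V) {τ : Fin (ε + 1) → Fin 6} (hτ : τ ∈ favorableTapes ε m) :
    (runSeg c₀ σ (c, (rstate c₀ σ ω j).2) j (List.ofFn τ)).1 = x := by
  rw [favorableTapes, Fintype.mem_piFinset] at hτ
  have hfirst : (τ 0).val % 3 = m := by simpa using hτ 0
  have hrest : ∀ i : Fin ε, (τ i.succ).val % 3 = 0 := fun i => by simpa using hτ i.succ
  rw [List.ofFn_succ, runSeg, rptStep_rstate_of_isUnionStep (hU j le_rfl (by omega)),
    hm c _ hfirst, runSeg_rstate_of_mod_three_eq_zero x _ (j + 1)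
      (fun t ht ht' => hU t (by omega) (by rw [List.length_ofFn] at ht'; omega))
      (by simpa [List.mem_ofFn] using hrest)]

end PivotTracking

theorem one_third_pow_le_div_six_pow {n N : ℕ} (h : 2 ^ n ≤ N) :
    ((1 : ℚ) / 3) ^ n ≤ N / 6 ^ n := by
  rw [le_div_iff₀ (by positivity), ← mul_pow]
  norm_num
  exact_mod_cast h

theorem randomizedPivotTracking_union_run_prob_general
    {V : Type*} [DecidableEq V]
    (c₀ : V) (σ : List (V × V)) :
    (∀ ω ω' : ℕ → Fin 6, ∀ t : ℕ,
      (rstate c₀ σ ω t).2 = (rstate c₀ σ ω' t).2) ∧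
    (∀ j ε : ℕ, 1 ≤ ε → j + ε ≤ σ.length →
      (∀ (ω : ℕ → Fin 6) (t : ℕ), j ≤ t → t < j + ε →
        (rstate c₀ σ ω t).2 ∩
          {(σ.getD t (c₀, c₀)).1, (σ.getD t (c₀, c₀)).2} = ∅) →
      ∀ x : V, (x = (σ.getD j (c₀, c₀)).1 ∨ x = (σ.getD j (c₀, c₀)).2) →
      ∀ (c : V) (ω₀ : ℕ → Fin 6),
        ((1 : ℚ) / 3) ^ ε ≤
          ((Finset.univ.filter fun τ : Fin ε → Fin 6 =>
              (runSeg c₀ σ (c, (rstate c₀ σ ω₀ j).2) j (List.ofFn τ)).1 = x).card : ℚ)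
            / 6 ^ ε) := by
  refine ⟨rstate_snd_eq c₀ σ, ?_⟩
  intro j ε hε _ hU x hx c ω₀
  obtain ⟨ε, rfl⟩ := Nat.exists_eq_add_of_le' hε
  obtain ⟨m, hm3, hmx⟩ := exists_unionCenter_eq hx
  apply one_third_pow_le_div_six_pow
  rw [← card_favorableTapes ε hm3]
  exact card_le_card fun τ hτ => mem_filter.2 ⟨mem_univ _,
    runSeg_rstate_fst_of_mem_favorableTapes (hU ω₀) hmx c hτ⟩

/-- Run Randomized PivotTracking on a fixed finite request
sequence `σ` from initial center `c₀`.
(a) The evolution of the candidate set `C` — and hence whether each step is a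
union or an intersection step — is deterministic, i.e. independent of the
random tape.
(b) Suppose steps `j, …, j + ε - 1` are all union steps and `x ∈ σⱼ`.  Then
for every possible center `c` before step `j`, the conditional probability —
i.e. the probability over a fresh uniform tape segment `τ : Fin ε → Fin 6` of
the run started from the state `(c, Cⱼ)`, where `Cⱼ` is the (deterministic)
candidate set before step `j` — that `x` is the center immediately after step
`j + ε - 1` is at least `(1/3)^ε`. -/
theorem randomizedPivotTracking_union_run_prob
    {V : Type*} [DecidableEq V] [Fintype V] (hn : 3 ≤ Fintype.card V)
    (c₀ : V) (σ : List (V × V)) (hσ : ∀ r ∈ σ, r.1 ≠ r.2) :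
    (∀ ω ω' : ℕ → Fin 6, ∀ t : ℕ,
      (rstate c₀ σ ω t).2 = (rstate c₀ σ ω' t).2) ∧
    (∀ j ε : ℕ, 1 ≤ ε → j + ε ≤ σ.length →
      (∀ (ω : ℕ → Fin 6) (t : ℕ), j ≤ t → t < j + ε →
        (rstate c₀ σ ω t).2 ∩
          {(σ.getD t (c₀, c₀)).1, (σ.getD t (c₀, c₀)).2} = ∅) →
      ∀ x : V, (x = (σ.getD j (c₀, c₀)).1 ∨ x = (σ.getD j (c₀, c₀)).2) →
      ∀ (c : V) (ω₀ : ℕ → Fin 6),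
        ((1 : ℚ) / 3) ^ ε ≤
          ((Finset.univ.filter fun τ : Fin ε → Fin 6 =>
              (runSeg c₀ σ (c, (rstate c₀ σ ω₀ j).2) j (List.ofFn τ)).1 = x).card : ℚ)
            / 6 ^ ε) :=
  randomizedPivotTracking_union_run_prob_general c₀ σ
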